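/- arXiv:1812.10563 — 2 statements merged into one kernel-verified Lean document; each statement's English description precedes it below -/
import Mathlib

section
/- Let v₁ > v₂ > ⋯ > v_m > 0, with each v_j independently placed into R with probability 1/2 (else into S). Let ALG be the value selected by the rule: take the smallest element of R strictly exceeding max(S) (with max(∅)=0), and 0 if no such element. Let M = max(R) (0 if R empty). Then E[ALG] ≥ (1/2) E[M]. -/
/-- Maximum of the values assigned to `R` (`c j = true`), with `max ∅ = 0`. -/
noncomputable def maxOfR {m : ℕ} (v : Fin m → ℝ) (c : Fin m → Bool) : ℝ :=
  Finset.univ.fold max 0 (fun j => if c j then v j else 0)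

/-- Maximum of the values assigned to `S` (`c j = false`), with `max ∅ = 0`. -/
noncomputable def maxOfS {m : ℕ} (v : Fin m → ℝ) (c : Fin m → Bool) : ℝ :=
  Finset.univ.fold max 0 (fun j => if c j then 0 else v j)

/-- The indices of values assigned to `R` that strictly exceed `max S`. -/
noncomputable def exceeders {m : ℕ} (v : Fin m → ℝ) (c : Fin m → Bool) :
    Finset (Fin m) :=
  Finset.univ.filter (fun j => c j = true ∧ maxOfS v c < v j)

/-- The algorithm's value: the smallest element of `R` strictly exceeding
`max S` (with `max ∅ = 0`), and `0` if no element of `R` exceeds `max S`. -/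
noncomputable def algValue {m : ℕ} (v : Fin m → ℝ) (c : Fin m → Bool) : ℝ :=
  if h : (exceeders v c).Nonempty then (exceeders v c).inf' h v else 0

/-! Induct on `m`, splitting on the coin of the largest value `v 0`. If `v 0` lands in `S`, the
algorithm gets nothing and `max R` is that of the remaining values. If it lands in `R`, then
`max R = v 0`, while the algorithm gets what it gets on the remaining values, plus `v 0` exactly
when none of them beats `max S`. That happens for at least half of the assignments of the
remaining values (for instance whenever the next largest value lands in `S`), so the algorithm
collects at least half of the new contribution `2 ^ (m - 1) * v 0` to the sum of `max R`. -/

open Finset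

lemma fold_max_univ_fin_succ {α : Type*} [LinearOrder α] {n : ℕ} (b : α)
    (f : Fin (n + 1) → α) :
    univ.fold max b f = max (f 0) (univ.fold max b (Fin.tail f)) := by
  rw [Fin.univ_succ, fold_cons, fold_map]
  rfl

lemma maxOfR_nonneg {m : ℕ} (v : Fin m → ℝ) (c : Fin m → Bool) : 0 ≤ maxOfR v c :=
  (le_fold_max _).2 (Or.inl le_rfl)

lemma maxOfS_nonneg {m : ℕ} (v : Fin m → ℝ) (c : Fin m → Bool) : 0 ≤ maxOfS v c :=
  (le_fold_max _).2 (Or.inl le_rfl)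

lemma algValue_of_exceeders_eq_empty {m : ℕ} {v : Fin m → ℝ} {c : Fin m → Bool}
    (h : exceeders v c = ∅) : algValue v c = 0 := by
  simp [algValue, h]

lemma sum_fun_fin_succ_bool {β : Type*} [AddCommMonoid β] {n : ℕ}
    (g : (Fin (n + 1) → Bool) → β) :
    ∑ c, g c = ∑ t, g (Fin.cons false t) + ∑ t, g (Fin.cons true t) := by
  rw [← Fintype.sum_equiv (Fin.consEquiv fun _ => Bool) (fun p => g (Fin.cons p.1 p.2)) g
    fun _ => rfl, Fintype.sum_prod_type, Fintype.sum_bool, add_comm]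

section Cons

variable {n : ℕ} (v : Fin (n + 1) → ℝ) (t : Fin n → Bool)

lemma maxOfR_cons (b : Bool) :
    maxOfR v (Fin.cons b t) = max (if b then v 0 else 0) (maxOfR (Fin.tail v) t) := by
  simp only [maxOfR]
  rw [fold_max_univ_fin_succ]
  rfl

lemma maxOfS_cons (b : Bool) :
    maxOfS v (Fin.cons b t) = max (if b then 0 else v 0) (maxOfS (Fin.tail v) t) := by
  simp only [maxOfS]
  rw [fold_max_univ_fin_succ]
  rfl

lemma maxOfR_cons_false : maxOfR v (Fin.cons false t) = maxOfR (Fin.tail v) t := by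
  simp [maxOfR_cons, maxOfR_nonneg]

lemma maxOfS_cons_true : maxOfS v (Fin.cons true t) = maxOfS (Fin.tail v) t := by
  simp [maxOfS_cons, maxOfS_nonneg]

variable {v}

lemma maxOfS_tail_lt (hv : StrictAnti v) (h0 : 0 < v 0) : maxOfS (Fin.tail v) t < v 0 :=
  (fold_max_lt _).2 ⟨h0, fun i _ => by split <;> [exact h0; exact hv i.succ_pos]⟩

lemma maxOfR_cons_true (hv : StrictAnti v) (h0 : 0 < v 0) : maxOfR v (Fin.cons true t) = v 0 := by
  have : maxOfR (Fin.tail v) t ≤ v 0 :=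
    (fold_max_le _).2 ⟨h0.le, fun i _ => by split <;> [exact (hv i.succ_pos).le; exact h0.le]⟩
  simpa [maxOfR_cons] using this

lemma exceeders_cons_false (hv : StrictAnti v) : exceeders v (Fin.cons false t) = ∅ := by
  have hS : v 0 ≤ maxOfS v (Fin.cons false t) := by simp [maxOfS_cons]
  refine eq_empty_of_forall_notMem fun j hj => ?_
  obtain ⟨hRj, hSj⟩ := (mem_filter.1 hj).2
  cases j using Fin.cases with
  | zero => simp at hRj
  | succ i => exact (hv i.succ_pos).not_gt (hS.trans_lt hSj)

lemma exceeders_cons_true (hv : StrictAnti v) (h0 : 0 < v 0) :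
    exceeders v (Fin.cons true t) = insert 0 ((exceeders (Fin.tail v) t).map (Fin.succEmb n)) := by
  ext j
  cases j using Fin.cases with
  | zero => simp [exceeders, maxOfS_cons_true, maxOfS_tail_lt t hv h0]
  | succ i =>
    simp only [exceeders, mem_insert, Fin.succ_ne_zero, mem_map, Fin.coe_succEmb,
      Fin.succ_inj, exists_eq_right, mem_filter_univ, Fin.cons_succ, maxOfS_cons_true,
      false_or]
    rfl

lemma algValue_cons_false (hv : StrictAnti v) : algValue v (Fin.cons false t) = 0 :=
  algValue_of_exceeders_eq_empty (exceeders_cons_false t hv)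

lemma algValue_cons_true (hv : StrictAnti v) (h0 : 0 < v 0) :
    algValue v (Fin.cons true t)
      = algValue (Fin.tail v) t + if exceeders (Fin.tail v) t = ∅ then v 0 else 0 := by
  have hne : (exceeders v (Fin.cons true t)).Nonempty := by
    simp [exceeders_cons_true t hv h0]
  rw [algValue, dif_pos hne]
  by_cases h : exceeders (Fin.tail v) t = ∅
  · simp [inf'_congr hne (exceeders_cons_true t hv h0) fun _ _ => rfl, h,
      algValue_of_exceeders_eq_empty h]
  · have htail : (exceeders (Fin.tail v) t).Nonempty := nonempty_iff_ne_empty.2 h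
    have hmin : (exceeders (Fin.tail v) t).inf' htail (Fin.tail v) ≤ v 0 :=
      let ⟨i, hi⟩ := htail
      inf'_le_of_le _ hi (hv i.succ_pos).le
    rw [inf'_congr hne (exceeders_cons_true t hv h0) fun _ _ => rfl, inf'_insert,
      inf'_map]
    change min (v 0) ((exceeders (Fin.tail v) t).inf' htail (Fin.tail v)) = _
    rw [min_eq_right hmin]
    · simp [algValue, htail, h]
    · exact htail.map

lemma sum_maxOfR_fin_succ (hv : StrictAnti v) (h0 : 0 < v 0) :
    ∑ c, maxOfR v c = ∑ t, maxOfR (Fin.tail v) t + 2 ^ n * v 0 := by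
  simp [sum_fun_fin_succ_bool, maxOfR_cons_false, maxOfR_cons_true _ hv h0]

lemma sum_algValue_fin_succ (hv : StrictAnti v) (h0 : 0 < v 0) :
    ∑ c, algValue v c
      = ∑ t, algValue (Fin.tail v) t + #{t | exceeders (Fin.tail v) t = ∅} * v 0 := by
  simp [sum_fun_fin_succ_bool, algValue_cons_false _ hv, algValue_cons_true _ hv h0,
    sum_add_distrib, sum_ite]

end Cons

lemma two_pow_le_two_mul_card_exceeders_eq_empty {n : ℕ} {v : Fin n → ℝ} (hv : StrictAnti v) :
    2 ^ n ≤ 2 * #{t : Fin n → Bool | exceeders v t = ∅} := by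
  cases n with
  | zero => simp [exceeders, filter_true_of_mem]
  | succ k =>
    have hcons_false : 2 ^ k ≤ #{t : Fin (k + 1) → Bool | exceeders v t = ∅} :=
      calc 2 ^ k = #(univ : Finset (Fin k → Bool)) := by simp
        _ ≤ _ := card_le_card_of_injOn (Fin.cons (α := fun _ => Bool) false)
          (fun s _ => by simp [exceeders_cons_false s hv]) (Fin.cons_right_injective _).injOn
    omega

lemma sum_maxOfR_le_two_mul_sum_algValue {m : ℕ} {v : Fin m → ℝ} (hpos : ∀ j, 0 < v j)
    (hv : StrictAnti v) : ∑ c, maxOfR v c ≤ 2 * ∑ c, algValue v c := by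
  induction m with
  | zero => simp [maxOfR, algValue, exceeders]
  | succ n ih =>
    have hv' : StrictAnti (Fin.tail v) := hv.comp_strictMono Fin.strictMono_succ
    have hcard : (2 : ℝ) ^ n ≤ 2 * #{t | exceeders (Fin.tail v) t = ∅} := by
      exact_mod_cast two_pow_le_two_mul_card_exceeders_eq_empty hv'
    have htail := ih (v := Fin.tail v) (fun j => hpos j.succ) hv'
    rw [sum_maxOfR_fin_succ hv (hpos 0), sum_algValue_fin_succ hv (hpos 0)]
    linarith [mul_le_mul_of_nonneg_right hcard (hpos 0).le]

/-- Core lemma: for distinct positive values `v 0 > ⋯ > v (m-1)` assigned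
independently to `S` or `R` by fair coins, the pessimistic algorithm earns at
least half of the expected maximum of `R` in expectation. -/
theorem stmt5 (m : ℕ) (v : Fin m → ℝ)
    (hpos : ∀ j, 0 < v j)
    (hanti : ∀ i j : Fin m, i < j → v j < v i) :
    (∑ c : Fin m → Bool, algValue v c) / 2 ^ m
      ≥ (1 / 2) * ((∑ c : Fin m → Bool, maxOfR v c) / 2 ^ m) := by
  have key := sum_maxOfR_le_two_mul_sum_algValue hpos fun i j => hanti i j
  rw [ge_iff_le, ← mul_div_assoc]
  gcongr
  linarith
end

section
/- In the paired coin-flip model with pairs (v_i¹, v_i²), all 2n values distinct, let T be the set of values larger than v_repeat (the first repeated-distribution value in decreasing order). For v ∈ T, the probability over the coin flips that v is the maximum of R equals (1/2)^{|T_v|+1} where T_v = {u ∈ T : u > v}; and the probability that v_repeat is the maximum of R equals (1/2)^{|T|}. -/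
/-!
Write pair `i` as `lo i < hi i`. Then `v_repeat = max lo`, so every `lo i` lies at or below it and
`T` consists of the `hi i` exceeding it, at most one per pair. Hence, for `x ≥ v_repeat`, the
maximum of `R` is `≤ x` exactly when no pair with `hi i > x` sends `hi i` to `R`, and it equals
`hi j` exactly when in addition pair `j` sends `hi j` to `R`. These are conditions on `|T_v| + 1`,
resp. `|T|`, distinct fair coins, each forcing one value.
-/

/-- `v_repeat`: scanning the `2n` pairwise-distinct values `w i k` in decreasing
order, the first value whose pair-partner appeared earlier, namely the largest
of the pairwise minima. -/
noncomputable def vRepeat (n : ℕ) (hn : 0 < n) (w : Fin n → Fin 2 → ℝ) : ℝ :=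
  Finset.univ.sup' (Finset.univ_nonempty_iff.mpr ⟨⟨0, hn⟩⟩)
    (fun i => min (w i 0) (w i 1))

/-- The maximum of `R` when the coin vector `c` sends, from each pair `i`,
the value `w i 1` to `R` if `c i` and `w i 0` otherwise. -/
noncomputable def pairedMaxR (n : ℕ) (hn : 0 < n) (w : Fin n → Fin 2 → ℝ)
    (c : Fin n → Bool) : ℝ :=
  Finset.univ.sup' (Finset.univ_nonempty_iff.mpr ⟨⟨0, hn⟩⟩)
    (fun i => w i (if c i then 1 else 0))

/-- `T`: the set of values strictly greater than `v_repeat`. -/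
noncomputable def upperSet (n : ℕ) (hn : 0 < n) (w : Fin n → Fin 2 → ℝ) :
    Finset ℝ :=
  ((Finset.univ : Finset (Fin n × Fin 2)).image fun p => w p.1 p.2).filter
    (fun x => vRepeat n hn w < x)

open Finset

section Coins

variable {ι : Type*} [Fintype ι] [DecidableEq ι]

theorem card_filter_forall_mem_eq (S : Finset ι) (b : ι → Bool) :
    #{c : ι → Bool | ∀ i ∈ S, c i = b i} = 2 ^ #Sᶜ := by
  have : ({c : ι → Bool | ∀ i ∈ S, c i = b i} : Finset _)
      = Fintype.piFinset fun i => if i ∈ S then {b i} else univ := by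
    ext c
    simp only [mem_filter, mem_univ, true_and, Fintype.mem_piFinset]
    refine forall_congr' fun i => ?_
    split_ifs <;> simp [*]
  rw [this, Fintype.card_piFinset, ← prod_mul_prod_compl S,
    prod_eq_one fun i hi => by simp [hi], one_mul, ← prod_const]
  exact prod_congr rfl fun i hi => by simp [mem_compl.mp hi]

theorem card_filter_forall_mem_div_two_pow (S : Finset ι) (b : ι → Bool) :
    (#{c : ι → Bool | ∀ i ∈ S, c i = b i} : ℝ) / 2 ^ Fintype.card ι = (1 / 2) ^ #S := by
  rw [card_filter_forall_mem_eq, ← card_compl_add_card S, pow_add]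
  field_simp
  simp

end Coins

section PairChoice

variable {ι α : Type*} [Fintype ι] [LinearOrder α]

def pairChoice (hi lo : ι → α) (t c : ι → Bool) (i : ι) : α :=
  if c i = t i then hi i else lo i

variable {hi lo : ι → α} (H : (univ : Finset ι).Nonempty) (t : ι → Bool)

theorem sup'_pairChoice_le_iff (c : ι → Bool) {v : α} (hlo : ∀ i, lo i ≤ v) :
    univ.sup' H (pairChoice hi lo t c) ≤ v ↔ ∀ i, v < hi i → c i ≠ t i := by
  simp only [sup'_le_iff, mem_univ, true_imp_iff, pairChoice]
  refine forall_congr' fun i => ?_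
  split_ifs with h <;> simp [h, hlo i]

theorem sup'_pairChoice_eq_sup'_iff (c : ι → Bool) (hle : ∀ i, lo i ≤ hi i) :
    univ.sup' H (pairChoice hi lo t c) = univ.sup' H lo ↔
      ∀ i, univ.sup' H lo < hi i → c i ≠ t i := by
  have hge : univ.sup' H lo ≤ univ.sup' H (pairChoice hi lo t c) :=
    sup'_mono_fun fun i _ => by unfold pairChoice; split_ifs <;> simp [hle i]
  rw [le_antisymm_iff, and_iff_left hge]
  exact sup'_pairChoice_le_iff H t c fun i => le_sup' lo (mem_univ i)

theorem sup'_pairChoice_eq_iff (c : ι → Bool) (hinj : Function.Injective hi) {j : ι}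
    (hj : ∀ i, lo i < hi j) :
    univ.sup' H (pairChoice hi lo t c) = hi j ↔
      c j = t j ∧ ∀ i, hi j < hi i → c i ≠ t i := by
  have hle := sup'_pairChoice_le_iff (hi := hi) H t c fun i => (hj i).le
  constructor
  · intro h
    refine ⟨?_, hle.1 h.le⟩
    obtain ⟨i, -, hmax⟩ := exists_mem_eq_sup' H (pairChoice hi lo t c)
    rw [h, pairChoice] at hmax
    split_ifs at hmax with hci
    · rwa [hinj hmax]
    · exact absurd hmax (hj i).ne'
  · rintro ⟨hcj, hgt⟩
    refine le_antisymm (hle.2 hgt) ?_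
    calc hi j = pairChoice hi lo t c j := by simp [pairChoice, hcj]
      _ ≤ _ := le_sup' _ (mem_univ j)

variable [DecidableEq ι]

theorem card_sup'_pairChoice_eq_sup'_div_two_pow (hle : ∀ i, lo i ≤ hi i) :
    (#{c | univ.sup' H (pairChoice hi lo t c) = univ.sup' H lo} : ℝ) / 2 ^ Fintype.card ι
      = (1 / 2) ^ #{i | univ.sup' H lo < hi i} := by
  rw [← card_filter_forall_mem_div_two_pow _ fun i => !t i]
  congr 3
  ext c
  simp only [mem_filter, mem_univ, true_and, sup'_pairChoice_eq_sup'_iff H t c hle, Bool.eq_not_iff]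

theorem card_sup'_pairChoice_eq_div_two_pow (hinj : Function.Injective hi) {j : ι}
    (hj : ∀ i, lo i < hi j) :
    (#{c | univ.sup' H (pairChoice hi lo t c) = hi j} : ℝ) / 2 ^ Fintype.card ι
      = (1 / 2) ^ (#{i | hi j < hi i} + 1) := by
  have hj_notMem : j ∉ ({i | hi j < hi i} : Finset ι) := by simp
  rw [← card_insert_of_notMem hj_notMem,
    ← card_filter_forall_mem_div_two_pow _ (Function.update (fun i => !t i) j (t j))]
  congr 3
  ext c
  simp only [mem_filter, mem_univ, true_and, sup'_pairChoice_eq_iff H t c hinj hj,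
    forall_mem_insert, Function.update_self]
  refine and_congr_right fun _ => forall_congr' fun i => imp_congr_right fun hji => ?_
  rw [Function.update_of_ne (ne_of_apply_ne hi hji.ne'), Bool.eq_not_iff]

end PairChoice

section Pairs

variable {n : ℕ} (w : Fin n → Fin 2 → ℝ)

def pairHi (i : Fin n) : ℝ := max (w i 0) (w i 1)

def pairLo (i : Fin n) : ℝ := min (w i 0) (w i 1)

noncomputable def topBit (i : Fin n) : Bool := decide (w i 0 < w i 1)

theorem apply_eq_pairChoice (c : Fin n → Bool) (i : Fin n) :
    w i (if c i then 1 else 0) = pairChoice (pairHi w) (pairLo w) (topBit w) c i := by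
  unfold pairChoice pairHi pairLo topBit
  by_cases h : w i 0 < w i 1 <;> cases c i <;> simp [h, le_of_lt, le_of_not_gt]

theorem pairedMaxR_eq_sup'_pairChoice (hn : 0 < n) (c : Fin n → Bool) :
    pairedMaxR n hn w c =
      univ.sup' (univ_nonempty_iff.mpr ⟨⟨0, hn⟩⟩)
        (pairChoice (pairHi w) (pairLo w) (topBit w) c) := by
  simp only [pairedMaxR, apply_eq_pairChoice]

theorem pairLo_le_vRepeat (hn : 0 < n) (i : Fin n) : pairLo w i ≤ vRepeat n hn w :=
  le_sup' (pairLo w) (mem_univ i)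

theorem pairLo_le_pairHi (i : Fin n) : pairLo w i ≤ pairHi w i := min_le_max

theorem apply_eq_pairLo_or_pairHi (i : Fin n) (k : Fin 2) :
    w i k = pairLo w i ∨ w i k = pairHi w i := by
  unfold pairLo pairHi
  fin_cases k <;> rcases le_total (w i 0) (w i 1) with h | h <;> simp [h]

theorem exists_apply_eq_pairHi (i : Fin n) : ∃ k, w i k = pairHi w i :=
  (max_choice (w i 0) (w i 1)).elim (fun h => ⟨0, h.symm⟩) fun h => ⟨1, h.symm⟩

theorem pairHi_injective (hw : Function.Injective fun p : Fin n × Fin 2 => w p.1 p.2) :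
    Function.Injective (pairHi w) := by
  intro i j hij
  obtain ⟨k, hk⟩ := exists_apply_eq_pairHi w i
  obtain ⟨l, hl⟩ := exists_apply_eq_pairHi w j
  exact congrArg Prod.fst (@hw (i, k) (j, l) (hk.trans (hij.trans hl.symm)))

theorem upperSet_eq_image (hn : 0 < n) :
    upperSet n hn w = ({i | vRepeat n hn w < pairHi w i} : Finset _).image (pairHi w) := by
  ext x
  simp only [upperSet, mem_filter, mem_image, mem_univ, true_and, Prod.exists]
  constructor
  · rintro ⟨⟨i, k, rfl⟩, hx⟩
    refine ⟨i, ?_⟩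
    rcases apply_eq_pairLo_or_pairHi w i k with hlo | hhi
    · exact absurd (pairLo_le_vRepeat w hn i) (hlo ▸ hx).not_ge
    · exact ⟨hhi ▸ hx, hhi.symm⟩
  · rintro ⟨i, hi, rfl⟩
    obtain ⟨k, hk⟩ := exists_apply_eq_pairHi w i
    exact ⟨⟨i, k, hk⟩, hi⟩

end Pairs

/-- Probabilities, over the independent fair pair-coins, that a given value is
the maximum of `R`: for `v ∈ T` it is `(1/2)^{|T_v|+1}` where
`T_v = {u ∈ T : u > v}`, and for `v_repeat` it is `(1/2)^{|T|}`. -/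
theorem stmt16 (n : ℕ) (hn : 0 < n) (w : Fin n → Fin 2 → ℝ)
    (hdistinct : Function.Injective fun p : Fin n × Fin 2 => w p.1 p.2) :
    (∀ v ∈ upperSet n hn w,
      ((Finset.univ.filter (fun c : Fin n → Bool =>
          pairedMaxR n hn w c = v)).card : ℝ) / 2 ^ n
        = (1 / 2) ^ (((upperSet n hn w).filter (fun u => v < u)).card + 1)) ∧
    ((Finset.univ.filter (fun c : Fin n → Bool =>
        pairedMaxR n hn w c = vRepeat n hn w)).card : ℝ) / 2 ^ n
      = (1 / 2) ^ (upperSet n hn w).card := by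
  have hne : (univ : Finset (Fin n)).Nonempty := univ_nonempty_iff.mpr ⟨⟨0, hn⟩⟩
  have hinj := pairHi_injective w hdistinct
  simp only [upperSet_eq_image, card_image_of_injective _ hinj, forall_mem_image, filter_image,
    pairedMaxR_eq_sup'_pairChoice, mem_filter, mem_univ, true_and]
  refine ⟨fun j hj => ?_, ?_⟩
  · have hcard := card_sup'_pairChoice_eq_div_two_pow hne (topBit w) hinj
      fun i => (pairLo_le_vRepeat w hn i).trans_lt hj
    rw [Fintype.card_fin] at hcard
    rw [hcard, filter_filter]
    congr 3
    ext i
    simp only [mem_filter, mem_univ, true_and]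
    exact ⟨fun h => ⟨hj.trans h, h⟩, And.right⟩
  · have hcard := card_sup'_pairChoice_eq_sup'_div_two_pow hne (topBit w) (pairLo_le_pairHi w)
    rwa [Fintype.card_fin] at hcard
end
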